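/- Let C₁ = K/W where K ~ N(0, σ₁²) and W ~ N(μ₂, σ₂²) are independent Gaussian random variables with σ₁, σ₂ > 0. Then C₁ has density f(c) = (1/√(2π)) u(c)^{-3/2} [ √(2u(c)) σ₁σ₂ /√π · e^{-μ₂²/(2σ₂²)} + σ₁² μ₂ e^{-μ₂² c²/(2u(c))} erf( μ₂ σ₁ /(√2 σ₂ √u(c)) ) ], where u(c) = σ₁² + c² σ₂². -/

import Mathlib

open MeasureTheory ProbabilityTheory Real

/-- The Gauss error function. -/
noncomputable def erf (x : ℝ) : ℝ := (2 / Real.sqrt π) * ∫ t in (0:ℝ)..x, Real.exp (-t ^ 2)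

/-- The density of the ratio of independent Gaussians `N(0,σ₁²) / N(μ₂,σ₂²)`. -/
noncomputable def gaussRatioPDF (σ₁ σ₂ μ₂ c : ℝ) : ℝ :=
  (1 / Real.sqrt (2 * π)) * (σ₁ ^ 2 + c ^ 2 * σ₂ ^ 2) ^ (-(3:ℝ)/2) *
    (Real.sqrt (2 * (σ₁ ^ 2 + c ^ 2 * σ₂ ^ 2)) * σ₁ * σ₂ / Real.sqrt π *
        Real.exp (-μ₂ ^ 2 / (2 * σ₂ ^ 2)) +
      σ₁ ^ 2 * μ₂ * Real.exp (-μ₂ ^ 2 * c ^ 2 / (2 * (σ₁ ^ 2 + c ^ 2 * σ₂ ^ 2))) *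
        erf (μ₂ * σ₁ / (Real.sqrt 2 * σ₂ * Real.sqrt (σ₁ ^ 2 + c ^ 2 * σ₂ ^ 2))))

/-!
By independence the law of `(K, W)` is `N(0, σ₁²) ⊗ N(μ₂, σ₂²)`. For `w ≠ 0` the slice
`{k | k / w ∈ s}` is a dilate of `s`, so its `N(0, σ₁²)`-mass is `|w| ∫_s φ₁(c w) dc`, and Tonelli
gives `K / W` the density `c ↦ ∫ |w| φ₁(c w) φ₂(w) dw`. Completing the square in `w` turns the
integrand into a multiple of `|w| exp(-α (w - m)²)`. Splitting at `w = 0`, each half-line integral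
of `w exp(-α (w ∓ m)²)` is an elementary term plus `±m` times a Gaussian tail, and the two tails
combine into the `erf` term.
-/

open Set Filter Topology
open scoped ENNReal

theorem erf_neg (x : ℝ) : erf (-x) = -erf x := by
  have h := intervalIntegral.integral_comp_neg (a := 0) (b := x) fun t : ℝ => exp (-t ^ 2)
  simp only [neg_sq, neg_zero] at h
  rw [erf, erf, ← mul_neg, intervalIntegral.integral_symm, ← h]

theorem integral_exp_neg_mul_sq_eq_erf {α : ℝ} (hα : 0 < α) (x : ℝ) :
    ∫ t in (0:ℝ)..x, exp (-α * t ^ 2) = √π / (2 * √α) * erf (√α * x) := by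
  have hs : 0 < √α := Real.sqrt_pos.mpr hα
  have h := intervalIntegral.integral_comp_mul_left (a := 0) (b := x)
    (fun t : ℝ => exp (-t ^ 2)) hs.ne'
  simp only [mul_pow, Real.sq_sqrt hα.le, mul_zero, ← neg_mul] at h
  rw [h, erf, smul_eq_mul]
  have hπ : 0 < √π := Real.sqrt_pos.mpr pi_pos
  field_simp

theorem integral_Ioi_exp_neg_mul_sq_sub {α : ℝ} (hα : 0 < α) (m : ℝ) :
    ∫ w in Ioi 0, exp (-α * (w - m) ^ 2) = √(π / α) / 2 * (1 + erf (√α * m)) := by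
  have hint : Integrable fun t : ℝ => exp (-α * t ^ 2) := integrable_exp_neg_mul_sq hα
  have hshift : ∫ w in Ioi 0, exp (-α * (w - m) ^ 2) = ∫ t in Ioi (-m), exp (-α * t ^ 2) := by
    have := (measurePreserving_sub_right volume m).setIntegral_preimage_emb
      (MeasurableEquiv.subRight m).measurableEmbedding (fun t => exp (-α * t ^ 2)) (Ioi (-m))
    simpa [neg_lt_sub_iff_lt_add] using this
  have hsplit := intervalIntegral.integral_Ioi_sub_Ioi' (μ := volume) (a := -m) (b := 0)
    hint.integrableOn hint.integrableOn
  have heven : ∫ t in -m..0, exp (-α * t ^ 2) = ∫ t in 0..m, exp (-α * t ^ 2) := by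
    have h := intervalIntegral.integral_comp_neg (a := 0) (b := m) fun t : ℝ => exp (-α * t ^ 2)
    simp only [neg_sq, neg_zero] at h
    exact h.symm
  rw [hshift, ← sub_add_cancel (∫ t in Ioi (-m), _) (∫ t in Ioi 0, exp (-α * t ^ 2)), hsplit,
    heven, integral_gaussian_Ioi, integral_exp_neg_mul_sq_eq_erf hα, Real.sqrt_div pi_pos.le]
  ring

theorem integrable_abs_mul_exp_neg_mul_sq_sub {α : ℝ} (hα : 0 < α) (m : ℝ) :
    Integrable fun w : ℝ => |w| * exp (-α * (w - m) ^ 2) := by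
  have h : Integrable fun w : ℝ => w * exp (-α * (w - m) ^ 2) :=
    (((integrable_mul_exp_neg_mul_sq hα).comp_sub_right m).add
      (((integrable_exp_neg_mul_sq hα).comp_sub_right m).const_mul m)).congr
      (ae_of_all _ fun w => by simp only [Pi.add_apply]; ring)
  exact h.abs.congr (ae_of_all _ fun w => by simp [abs_mul, abs_of_pos (exp_pos _)])

theorem integral_Ioi_mul_exp_neg_mul_sq_sub {α : ℝ} (hα : 0 < α) (m : ℝ) :
    ∫ w in Ioi 0, w * exp (-α * (w - m) ^ 2)
      = exp (-α * m ^ 2) / (2 * α) + m * (√(π / α) / 2 * (1 + erf (√α * m))) := by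
  set F : ℝ → ℝ := fun w => exp (-α * (w - m) ^ 2) / -(2 * α)
  have hF : ∀ w, HasDerivAt F ((w - m) * exp (-α * (w - m) ^ 2)) w := by
    intro w
    refine ((((hasDerivAt_id' w).sub_const m).pow 2).const_mul (-α)).exp.div_const (-(2 * α))
      |>.congr_deriv ?_
    simp only [Pi.pow_apply]
    field_simp
    ring
  have hF_top : Tendsto F atTop (𝓝 0) := by
    have h : Tendsto (fun w : ℝ => -α * (w - m) ^ 2) atTop atBot :=
      (tendsto_pow_atTop two_ne_zero |>.comp (tendsto_atTop_add_const_right _ (-m) tendsto_id))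
        |>.const_mul_atTop_of_neg (neg_lt_zero.mpr hα)
    simpa [F] using (tendsto_exp_atBot.comp h).div_const (-(2 * α))
  have hsub : Integrable fun w : ℝ => (w - m) * exp (-α * (w - m) ^ 2) :=
    (integrable_mul_exp_neg_mul_sq hα).comp_sub_right m
  have hexp : Integrable fun w : ℝ => exp (-α * (w - m) ^ 2) :=
    (integrable_exp_neg_mul_sq hα).comp_sub_right m
  have hFTC := integral_Ioi_of_hasDerivAt_of_tendsto
    (hF 0).continuousAt.continuousWithinAt (fun w _ => hF w) hsub.integrableOn hF_top
  calc ∫ w in Ioi 0, w * exp (-α * (w - m) ^ 2)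
      = ∫ w in Ioi 0, ((w - m) * exp (-α * (w - m) ^ 2) + m * exp (-α * (w - m) ^ 2)) := by
        congr 1; ext w; ring
    _ = _ := by
        rw [integral_add hsub.integrableOn (hexp.const_mul m).integrableOn, hFTC,
          integral_const_mul, integral_Ioi_exp_neg_mul_sq_sub hα]
        simp only [F, zero_sub, neg_sq]
        ring

theorem integral_abs_mul_exp_neg_mul_sq_sub {α : ℝ} (hα : 0 < α) (m : ℝ) :
    ∫ w, |w| * exp (-α * (w - m) ^ 2)
      = exp (-α * m ^ 2) / α + m * √(π / α) * erf (√α * m) := by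
  have hint := integrable_abs_mul_exp_neg_mul_sq_sub hα m
  have hIoi : ∫ w in Ioi 0, |w| * exp (-α * (w - m) ^ 2)
      = ∫ w in Ioi 0, w * exp (-α * (w - m) ^ 2) :=
    setIntegral_congr_fun measurableSet_Ioi fun w hw => by rw [abs_of_pos hw]
  have hIic : ∫ w in Iic 0, |w| * exp (-α * (w - m) ^ 2)
      = ∫ w in Ioi 0, w * exp (-α * (w - -m) ^ 2) := by
    have h := integral_comp_neg_Ioi 0 fun w => |w| * exp (-α * (w - m) ^ 2)
    rw [neg_zero] at h
    rw [← h]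
    refine setIntegral_congr_fun measurableSet_Ioi fun w (hw : 0 < w) => ?_
    rw [abs_neg, abs_of_pos hw]
    ring_nf
  rw [← intervalIntegral.integral_Iic_add_Ioi (b := 0) hint.integrableOn hint.integrableOn, hIoi,
    hIic, integral_Ioi_mul_exp_neg_mul_sq_sub hα, integral_Ioi_mul_exp_neg_mul_sq_sub hα, mul_neg,
    erf_neg]
  ring_nf

theorem setLIntegral_preimage_div_const {f : ℝ → ℝ≥0∞} (hf : Measurable f) {w : ℝ} (hw : w ≠ 0)
    {s : Set ℝ} (hs : MeasurableSet s) :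
    ∫⁻ k in (· / w) ⁻¹' s, f k = ENNReal.ofReal |w| * ∫⁻ c in s, f (c * w) := by
  conv_lhs => rw [← Real.smul_map_volume_mul_right hw]
  rw [Measure.restrict_smul, lintegral_smul_measure, smul_eq_mul,
    setLIntegral_map (measurable_div_const w hs) hf (measurable_mul_const w)]
  congr 3
  ext c
  simp [mul_div_cancel_right₀ _ hw]

theorem map_div_prod_withDensity {f : ℝ → ℝ≥0∞} (hf : Measurable f) (ν : Measure ℝ) [SFinite ν]
    [NullSingletonClass ν] :
    ((volume.withDensity f).prod ν).map (fun p => p.1 / p.2)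
      = volume.withDensity fun c => ∫⁻ w, ENNReal.ofReal |w| * f (c * w) ∂ν := by
  ext s hs
  rw [Measure.map_apply measurable_div hs, Measure.prod_apply_symm (measurable_div hs),
    withDensity_apply _ hs, lintegral_lintegral_swap (by fun_prop)]
  refine lintegral_congr_ae ?_
  filter_upwards [ν.ae_ne 0] with w hw
  change volume.withDensity f ((· / w) ⁻¹' s) = _
  rw [withDensity_apply _ (measurable_div_const w hs), setLIntegral_preimage_div_const hf hw hs,
    lintegral_const_mul _ (by fun_prop)]

section GaussianRatio

variable {σ₁ σ₂ : ℝ} (μ₂ : ℝ)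

theorem gaussianPDFReal_mul_gaussianPDFReal_eq (hσ₁ : 0 < σ₁) (hσ₂ : 0 < σ₂) (c w : ℝ) :
    gaussianPDFReal 0 (σ₁ ^ 2).toNNReal (c * w) * gaussianPDFReal μ₂ (σ₂ ^ 2).toNNReal w =
      1 / (2 * π * σ₁ * σ₂) * exp (-μ₂ ^ 2 * c ^ 2 / (2 * (σ₁ ^ 2 + c ^ 2 * σ₂ ^ 2))) *
        exp (-((σ₁ ^ 2 + c ^ 2 * σ₂ ^ 2) / (2 * σ₁ ^ 2 * σ₂ ^ 2)) *
          (w - μ₂ * σ₁ ^ 2 / (σ₁ ^ 2 + c ^ 2 * σ₂ ^ 2)) ^ 2) := by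
  have hu : 0 < σ₁ ^ 2 + c ^ 2 * σ₂ ^ 2 := by positivity
  simp only [gaussianPDFReal, Real.coe_toNNReal _ (sq_nonneg _), Real.sqrt_mul' _ (sq_nonneg _),
    Real.sqrt_sq hσ₁.le, Real.sqrt_sq hσ₂.le]
  rw [mul_mul_mul_comm, ← exp_add, mul_assoc (1 / _), ← exp_add]
  have h2π : √(2 * π) ^ 2 = 2 * π := Real.sq_sqrt (by positivity)
  congr 1
  · field_simp
    rw [h2π]
  · congr 1
    field_simp
    ring

theorem integrable_abs_mul_gaussianPDFReal_mul_gaussianPDFReal (hσ₁ : 0 < σ₁) (hσ₂ : 0 < σ₂)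
    (c : ℝ) :
    Integrable fun w => |w| * (gaussianPDFReal 0 (σ₁ ^ 2).toNNReal (c * w) *
      gaussianPDFReal μ₂ (σ₂ ^ 2).toNNReal w) := by
  set u := σ₁ ^ 2 + c ^ 2 * σ₂ ^ 2
  have hα : 0 < u / (2 * σ₁ ^ 2 * σ₂ ^ 2) := by positivity
  refine ((integrable_abs_mul_exp_neg_mul_sq_sub hα (μ₂ * σ₁ ^ 2 / u)).const_mul
    (1 / (2 * π * σ₁ * σ₂) * exp (-μ₂ ^ 2 * c ^ 2 / (2 * u)))).congr (ae_of_all _ fun w => ?_)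
  simp only [gaussianPDFReal_mul_gaussianPDFReal_eq μ₂ hσ₁ hσ₂]
  ring

theorem integral_abs_mul_gaussianPDFReal_mul_gaussianPDFReal (hσ₁ : 0 < σ₁) (hσ₂ : 0 < σ₂)
    (c : ℝ) :
    ∫ w, |w| * (gaussianPDFReal 0 (σ₁ ^ 2).toNNReal (c * w) *
      gaussianPDFReal μ₂ (σ₂ ^ 2).toNNReal w) = gaussRatioPDF σ₁ σ₂ μ₂ c := by
  set u := σ₁ ^ 2 + c ^ 2 * σ₂ ^ 2
  have hu : 0 < u := by positivity
  set α := u / (2 * σ₁ ^ 2 * σ₂ ^ 2)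
  set m := μ₂ * σ₁ ^ 2 / u
  have hα : 0 < α := by positivity
  have hprod : ∀ w, |w| * (gaussianPDFReal 0 (σ₁ ^ 2).toNNReal (c * w) *
      gaussianPDFReal μ₂ (σ₂ ^ 2).toNNReal w) = 1 / (2 * π * σ₁ * σ₂) *
        exp (-μ₂ ^ 2 * c ^ 2 / (2 * u)) * (|w| * exp (-α * (w - m) ^ 2)) := fun w => by
    rw [gaussianPDFReal_mul_gaussianPDFReal_eq μ₂ hσ₁ hσ₂]
    ring
  simp_rw [hprod]
  rw [integral_const_mul, integral_abs_mul_exp_neg_mul_sq_sub hα]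
  have hexp :
      exp (-μ₂ ^ 2 * c ^ 2 / (2 * u)) * exp (-α * m ^ 2) = exp (-μ₂ ^ 2 / (2 * σ₂ ^ 2)) := by
    rw [← exp_add]
    congr 1
    simp only [u, α, m]
    field_simp
    ring
  have hsqrtα : √α = √u / (√2 * (σ₁ * σ₂)) := by
    rw [Real.sqrt_div hu.le, show 2 * σ₁ ^ 2 * σ₂ ^ 2 = 2 * (σ₁ * σ₂) ^ 2 by ring,
      Real.sqrt_mul zero_le_two, Real.sqrt_sq (by positivity)]
  have herf : √α * m = μ₂ * σ₁ / (√2 * σ₂ * √u) := by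
    rw [hsqrtα]
    simp only [m]
    field_simp
    rw [Real.sq_sqrt hu.le]
    ring
  have hrpow : u ^ (-(3:ℝ)/2) = (u * √u)⁻¹ := by
    rw [neg_div, Real.rpow_neg hu.le, show (3:ℝ) / 2 = 1 + 1 / 2 by norm_num, Real.rpow_add hu,
      Real.rpow_one, ← Real.sqrt_eq_rpow]
  rw [gaussRatioPDF, hrpow, herf, Real.sqrt_div' _ hα.le, hsqrtα, Real.sqrt_mul' _ hu.le,
    Real.sqrt_mul' _ pi_pos.le, ← hexp]
  generalize erf _ = E, exp (-μ₂ ^ 2 * c ^ 2 / (2 * u)) = E₁, exp (-α * m ^ 2) = E₂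
  simp only [α, m]
  field_simp
  rw [Real.sq_sqrt pi_pos.le]
  linear_combination π * E₁ * σ₁ * μ₂ * √π * E * Real.sq_sqrt zero_le_two

theorem lintegral_abs_mul_gaussianPDF (hσ₁ : 0 < σ₁) (hσ₂ : 0 < σ₂) (c : ℝ) :
    ∫⁻ w, ENNReal.ofReal |w| * gaussianPDF 0 (σ₁ ^ 2).toNNReal (c * w)
        ∂gaussianReal μ₂ (σ₂ ^ 2).toNNReal = ENNReal.ofReal (gaussRatioPDF σ₁ σ₂ μ₂ c) := by
  have hv₂ : (σ₂ ^ 2).toNNReal ≠ 0 := by simp [hσ₂.ne']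
  rw [gaussianReal_of_var_ne_zero _ hv₂,
    lintegral_withDensity_eq_lintegral_mul _ (measurable_gaussianPDF _ _) (by fun_prop),
    ← integral_abs_mul_gaussianPDFReal_mul_gaussianPDFReal μ₂ hσ₁ hσ₂,
    ofReal_integral_eq_lintegral_ofReal
      (integrable_abs_mul_gaussianPDFReal_mul_gaussianPDFReal μ₂ hσ₁ hσ₂ c)
      (ae_of_all _ fun w => mul_nonneg (abs_nonneg w)
        (mul_nonneg (gaussianPDFReal_nonneg _ _ _) (gaussianPDFReal_nonneg _ _ _)))]
  refine lintegral_congr fun w => ?_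
  simp only [Pi.mul_apply, gaussianPDF]
  rw [← ENNReal.ofReal_mul (abs_nonneg w), ← ENNReal.ofReal_mul (gaussianPDFReal_nonneg _ _ _)]
  congr 1
  ring

end GaussianRatio

theorem gaussian_ratio_density_general {Ω : Type*} [MeasurableSpace Ω] (μ : Measure Ω)
    (K W : Ω → ℝ) (hK : Measurable K) (hW : Measurable W)
    (hindep : IndepFun K W μ) (σ₁ σ₂ μ₂ : ℝ) (hσ₁ : 0 < σ₁) (hσ₂ : 0 < σ₂)
    (hdK : Measure.map K μ = gaussianReal 0 (Real.toNNReal (σ₁ ^ 2)))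
    (hdW : Measure.map W μ = gaussianReal μ₂ (Real.toNNReal (σ₂ ^ 2))) :
    Measure.map (fun ω => K ω / W ω) μ =
      volume.withDensity (fun c => ENNReal.ofReal (gaussRatioPDF σ₁ σ₂ μ₂ c)) := by
  have hv₁ : (σ₁ ^ 2).toNNReal ≠ 0 := by simp [hσ₁.ne']
  have hv₂ : (σ₂ ^ 2).toNNReal ≠ 0 := by simp [hσ₂.ne']
  have := nullSingletonClass_gaussianReal (μ := μ₂) hv₂
  have hjoint : μ.map (fun ω => (K ω, W ω)) =
      (gaussianReal 0 (σ₁ ^ 2).toNNReal).prod (gaussianReal μ₂ (σ₂ ^ 2).toNNReal) := by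
    rw [← hdK, ← hdW]
    exact (indepFun_iff_map_prod_eq_prod_map_map' hK.aemeasurable hW.aemeasurable
      (by rw [hdK]; infer_instance) (by rw [hdW]; infer_instance)).mp hindep
  rw [show (fun ω => K ω / W ω) = (fun p : ℝ × ℝ => p.1 / p.2) ∘ fun ω => (K ω, W ω) from rfl,
    ← Measure.map_map measurable_div (hK.prodMk hW), hjoint,
    gaussianReal_of_var_ne_zero 0 hv₁, map_div_prod_withDensity (measurable_gaussianPDF _ _)]
  simp_rw [lintegral_abs_mul_gaussianPDF μ₂ hσ₁ hσ₂]

theorem gaussian_ratio_density {Ω : Type*} [MeasurableSpace Ω] (μ : Measure Ω)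
    [IsProbabilityMeasure μ] (K W : Ω → ℝ) (hK : Measurable K) (hW : Measurable W)
    (hindep : IndepFun K W μ) (σ₁ σ₂ μ₂ : ℝ) (hσ₁ : 0 < σ₁) (hσ₂ : 0 < σ₂)
    (hdK : Measure.map K μ = gaussianReal 0 (Real.toNNReal (σ₁ ^ 2)))
    (hdW : Measure.map W μ = gaussianReal μ₂ (Real.toNNReal (σ₂ ^ 2))) :
    Measure.map (fun ω => K ω / W ω) μ =
      volume.withDensity (fun c => ENNReal.ofReal (gaussRatioPDF σ₁ σ₂ μ₂ c)) :=
  gaussian_ratio_density_general μ K W hK hW hindep σ₁ σ₂ μ₂ hσ₁ hσ₂ hdK hdW
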